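/- Let λ₁, …, λ_n ∈ ℂ be distinct points such that every origin-centred circle contains at most two of them, let ρ₁, …, ρ_n > 0, and define the inner product ⟨p, q⟩ = Σ_{k=1}^n p(λ_k) conj(q(λ_k)) ρ_k on the space P_{n−1}(r2). Then this inner product is positive definite, i.e., ⟨p, p⟩ > 0 for every nonzero p ∈ P_{n−1}(r2); equivalently, no nonzero element of P_{n−1}(r2) vanishes at all of λ₁, …, λ_n. -/

import Mathlib

/-!
Write `p(z) = A(|z|²) + z B(|z|²)` with polynomials `A`, `B`. If `p` vanishes at every `λₖ`, then
`F = A Ā - X B B̄` (bars conjugating coefficients), which at real `x` equals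
`|A(x)|² - x |B(x)|²`, vanishes at each `|λₖ|²`; on a circle carrying two support points both
`A` and `B` vanish, so the root is double. Counting multiplicities, `F` has `n` roots but degree
`< n`, hence `F = 0`, and on the negative half-axis this forces `A = B = 0`.
-/

open Complex Polynomial

namespace Polynomial

theorem degree_sum_range_C_mul_X_pow_lt {R : Type*} [Semiring R] (c : ℕ → R) (m : ℕ) :
    (∑ k ∈ Finset.range m, C (c k) * X ^ k).degree < (m : WithBot ℕ) := by
  refine (degree_sum_le _ _).trans_lt ((Finset.sup_lt_iff (WithBot.bot_lt_coe m)).mpr ?_)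
  intro k hk
  exact (degree_C_mul_X_pow_le _ _).trans_lt (WithBot.coe_lt_coe.mpr (Finset.mem_range.mp hk))

theorem card_le_natDegree_of_forall_pow_card_fiber_dvd {R ι : Type*} [CommRing R] [IsDomain R]
    [DecidableEq R] [Fintype ι] {F : R[X]} (hF : F ≠ 0) (x : ι → R)
    (hdvd : ∀ i, (X - C (x i)) ^ (Finset.univ.filter (fun j => x j = x i)).card ∣ F) :
    Fintype.card ι ≤ F.natDegree := by
  have hle : Finset.univ.val.map x ≤ F.roots := by
    refine Multiset.le_iff_count.mpr fun a => ?_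
    by_cases ha : ∃ i, x i = a
    · obtain ⟨i, rfl⟩ := ha
      rw [count_roots, le_rootMultiplicity_iff hF, Multiset.count_map]
      simp only [eq_comm (a := x i)]
      exact hdvd i
    · push Not at ha
      rw [Multiset.count_eq_zero.mpr (by simpa using ha)]
      exact Nat.zero_le _
  simpa using (Multiset.card_le_card hle).trans (card_roots' F)

theorem eq_zero_of_forall_neg_eval_eq_zero {P : ℂ[X]} (h : ∀ x : ℝ, x < 0 → P.eval (x : ℂ) = 0) :
    P = 0 := by
  refine P.eq_zero_of_infinite_isRoot (Set.Infinite.mono ?_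
    ((Set.Iio_infinite (0 : ℝ)).image ofReal_injective.injOn))
  rintro _ ⟨x, hx, rfl⟩
  exact h x hx

end Polynomial

theorem eval_map_conj_ofReal (P : ℂ[X]) (x : ℝ) :
    (P.map (starRingEnd ℂ)).eval (x : ℂ) = starRingEnd ℂ (P.eval (x : ℂ)) := by
  simpa using eval_map_apply (p := P) (starRingEnd ℂ) (x : ℂ)

noncomputable def normSqForm (A B : ℂ[X]) : ℂ[X] :=
  A * A.map (starRingEnd ℂ) - X * (B * B.map (starRingEnd ℂ))

theorem eval_ofReal_normSqForm (A B : ℂ[X]) (x : ℝ) :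
    (normSqForm A B).eval (x : ℂ) =
      ((normSq (A.eval (x : ℂ)) - x * normSq (B.eval (x : ℂ)) : ℝ) : ℂ) := by
  simp only [normSqForm, eval_sub, eval_mul, eval_X, eval_map_conj_ofReal, mul_conj]
  push_cast
  ring

theorem degree_X_pow_mul_mul_map_conj_lt {A : ℂ[X]} {a e N : ℕ} (hA : A.degree < a)
    (h : 2 * a + e ≤ N + 1) : (X ^ e * (A * A.map (starRingEnd ℂ))).degree < (N : WithBot ℕ) := by
  rcases eq_or_ne A 0 with rfl | hA0
  · simp
  have hm : A.natDegree < a := (natDegree_lt_iff_degree_lt hA0).mpr hA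
  have hdeg : (X ^ e * (A * A.map (starRingEnd ℂ))).natDegree ≤ e + (A.natDegree + A.natDegree) :=
    natDegree_mul_le.trans (add_le_add (natDegree_X_pow_le e)
      (natDegree_mul_le.trans (add_le_add le_rfl (natDegree_map_le))))
  exact degree_le_natDegree.trans_lt (by exact_mod_cast (by omega : _ < N))

theorem degree_normSqForm_lt {A B : ℂ[X]} {a b N : ℕ} (hA : A.degree < a) (hB : B.degree < b)
    (ha : 2 * a ≤ N + 1) (hb : 2 * b ≤ N) : (normSqForm A B).degree < (N : WithBot ℕ) := by
  refine (degree_sub_le _ _).trans_lt (max_lt ?_ ?_)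
  · simpa using degree_X_pow_mul_mul_map_conj_lt (e := 0) hA ha
  · simpa using degree_X_pow_mul_mul_map_conj_lt (e := 1) hB (by omega)

/-- For `x < 0` the two terms of `|A x|² - x |B x|²` are nonnegative. -/
theorem eq_zero_of_normSqForm_eq_zero {A B : ℂ[X]} (h : normSqForm A B = 0) : A = 0 ∧ B = 0 := by
  have hneg : ∀ x : ℝ, x < 0 → A.eval (x : ℂ) = 0 ∧ B.eval (x : ℂ) = 0 := by
    intro x hx
    have hx' := eval_ofReal_normSqForm A B x
    rw [h, eval_zero, eq_comm, ofReal_eq_zero] at hx'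
    have hA := normSq_nonneg (A.eval (x : ℂ))
    have hB := normSq_nonneg (B.eval (x : ℂ))
    have hB0 : normSq (B.eval (x : ℂ)) = 0 := by nlinarith
    exact ⟨normSq_eq_zero.mp (by nlinarith), normSq_eq_zero.mp hB0⟩
  exact ⟨eq_zero_of_forall_neg_eval_eq_zero fun x hx => (hneg x hx).1,
    eq_zero_of_forall_neg_eval_eq_zero fun x hx => (hneg x hx).2⟩

theorem eval_normSqForm_eq_zero {A B : ℂ[X]} {z : ℂ}
    (hz : A.eval ((‖z‖ ^ 2 : ℝ) : ℂ) + z * B.eval ((‖z‖ ^ 2 : ℝ) : ℂ) = 0) :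
    (normSqForm A B).eval ((‖z‖ ^ 2 : ℝ) : ℂ) = 0 := by
  rw [eval_ofReal_normSqForm, eq_neg_of_add_eq_zero_left hz, normSq_neg, normSq_mul,
    normSq_eq_norm_sq z, sub_self, ofReal_zero]

theorem X_sub_C_sq_dvd_normSqForm {A B : ℂ[X]} {x : ℝ} (hA : A.eval (x : ℂ) = 0)
    (hB : B.eval (x : ℂ) = 0) : (X - C (x : ℂ)) ^ 2 ∣ normSqForm A B := by
  have hdvd : ∀ P : ℂ[X], P.eval (x : ℂ) = 0 →
      (X - C (x : ℂ)) ^ 2 ∣ P * P.map (starRingEnd ℂ) := fun P hP =>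
    sq (X - C (x : ℂ)) ▸ mul_dvd_mul (dvd_iff_isRoot.mpr hP)
      (dvd_iff_isRoot.mpr (by rw [IsRoot, eval_map_conj_ofReal, hP, map_zero]))
  exact dvd_sub (hdvd A hA) (dvd_mul_of_dvd_right (hdvd B hB) X)

section Biradial

variable {ι : Type*} [Fintype ι] {l : ι → ℂ} {A B : ℂ[X]}

theorem pow_card_fiber_dvd_normSqForm (hinj : Function.Injective l)
    (hbir : ∀ r : ℝ, Set.ncard {k | ‖l k‖ = r} ≤ 2)
    (hvanish : ∀ k, A.eval ((‖l k‖ ^ 2 : ℝ) : ℂ) + l k * B.eval ((‖l k‖ ^ 2 : ℝ) : ℂ) = 0)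
    (k : ι) :
    (X - C ((‖l k‖ ^ 2 : ℝ) : ℂ)) ^
        (Finset.univ.filter fun j => ((‖l j‖ ^ 2 : ℝ) : ℂ) = ((‖l k‖ ^ 2 : ℝ) : ℂ)).card ∣
      normSqForm A B := by
  classical
  have hfiber : (Finset.univ.filter fun j => ((‖l j‖ ^ 2 : ℝ) : ℂ) = ((‖l k‖ ^ 2 : ℝ) : ℂ)) =
      Finset.univ.filter fun j => ‖l j‖ = ‖l k‖ := by
    ext j
    simp only [Finset.mem_filter, Finset.mem_univ, true_and, ofReal_inj,
      pow_left_inj₀ (norm_nonneg (l j)) (norm_nonneg (l k)) two_ne_zero]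
  rw [hfiber]
  by_cases htwo : ∃ j, j ≠ k ∧ ‖l j‖ = ‖l k‖
  · obtain ⟨j, hjk, hj⟩ := htwo
    have hB : B.eval ((‖l k‖ ^ 2 : ℝ) : ℂ) = 0 := by
      have hdiff := (hvanish j).trans (hvanish k).symm
      rw [hj, add_right_inj] at hdiff
      exact (mul_eq_mul_right_iff.mp hdiff).resolve_left (hinj.ne hjk)
    have hA : A.eval ((‖l k‖ ^ 2 : ℝ) : ℂ) = 0 := by
      simpa only [hB, mul_zero, add_zero] using hvanish k
    refine (pow_dvd_pow _ ?_).trans (X_sub_C_sq_dvd_normSqForm hA hB)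
    simpa [Set.ncard_eq_toFinset_card'] using hbir ‖l k‖
  · push Not at htwo
    have hsingle : (Finset.univ.filter fun j => ‖l j‖ = ‖l k‖) = {k} := by
      ext j
      simp only [Finset.mem_filter, Finset.mem_univ, true_and, Finset.mem_singleton]
      exact ⟨fun h => by_contra fun hjk => htwo j hjk h, fun h => h ▸ rfl⟩
    rw [hsingle, Finset.card_singleton, pow_one, dvd_iff_isRoot]
    exact eval_normSqForm_eq_zero (hvanish k)

theorem eq_zero_of_forall_eval_eq_zero_of_biradial (hinj : Function.Injective l)
    (hbir : ∀ r : ℝ, Set.ncard {k | ‖l k‖ = r} ≤ 2)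
    (hdeg : (normSqForm A B).degree < Fintype.card ι)
    (hvanish : ∀ k, A.eval ((‖l k‖ ^ 2 : ℝ) : ℂ) + l k * B.eval ((‖l k‖ ^ 2 : ℝ) : ℂ) = 0) :
    A = 0 ∧ B = 0 := by
  classical
  refine eq_zero_of_normSqForm_eq_zero (by_contra fun hF => ?_)
  have hcard := card_le_natDegree_of_forall_pow_card_fiber_dvd hF _
    (pow_card_fiber_dvd_normSqForm hinj hbir hvanish)
  exact hcard.not_gt ((natDegree_lt_iff_degree_lt hF).mpr hdeg)

end Biradial

theorem sum_range_eq_eval_add_mul_eval (α : ℕ → ℂ) (m : ℕ) (z : ℂ) :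
    ∑ k ∈ Finset.range m, (α (2 * k) + α (2 * k + 1) * z) * ((‖z‖ : ℝ) : ℂ) ^ (2 * k) =
      (∑ k ∈ Finset.range m, C (α (2 * k)) * X ^ k).eval ((‖z‖ ^ 2 : ℝ) : ℂ) +
        z * (∑ k ∈ Finset.range m, C (α (2 * k + 1)) * X ^ k).eval ((‖z‖ ^ 2 : ℝ) : ℂ) := by
  simp only [eval_finsetSum, eval_mul, eval_pow, eval_C, eval_X, Finset.mul_sum,
    ← Finset.sum_add_distrib, pow_mul]
  push_cast
  exact Finset.sum_congr rfl fun k _ => by ring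

/-- The `L²` inner product determined by a biradial measure with `n`-point
support is positive definite on `P_{n-1}(r2)`. -/
theorem stmt11 (n : ℕ) (hn : 0 < n) (l : Fin n → ℂ) (hinj : Function.Injective l)
    (hbir : ∀ r : ℝ, Set.ncard {k : Fin n | ‖l k‖ = r} ≤ 2)
    (ρ : Fin n → ℝ) (hρ : ∀ k, 0 < ρ k)
    (α : ℕ → ℂ) (hα : n % 2 = 1 → α n = 0)
    (p : ℂ → ℂ)
    (hp : p = fun z => ∑ k ∈ Finset.range ((n - 1) / 2 + 1),
      (α (2 * k) + α (2 * k + 1) * z) * ((‖z‖ : ℝ) : ℂ) ^ (2 * k))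
    (hpne : ∃ z, p z ≠ 0) :
    0 < ∑ k, ρ k * ‖p (l k)‖ ^ 2 := by
  set d := (n - 1) / 2
  set A : ℂ[X] := ∑ k ∈ Finset.range (d + 1), C (α (2 * k)) * X ^ k
  set B : ℂ[X] := ∑ k ∈ Finset.range (d + 1), C (α (2 * k + 1)) * X ^ k
  have hrep : ∀ z, p z = A.eval ((‖z‖ ^ 2 : ℝ) : ℂ) + z * B.eval ((‖z‖ ^ 2 : ℝ) : ℂ) :=
    fun z => hp ▸ sum_range_eq_eval_add_mul_eval α (d + 1) z
  -- for odd `n` the top coefficient of `B` is `α n = 0`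
  obtain ⟨b, hB, hb⟩ : ∃ b : ℕ, B.degree < b ∧ 2 * b ≤ n := by
    rcases Nat.even_or_odd n with he | ho
    · exact ⟨d + 1, degree_sum_range_C_mul_X_pow_lt _ _, by grind⟩
    · have hn' : 2 * d + 1 = n := by grind
      refine ⟨d, ?_, by omega⟩
      change (∑ k ∈ Finset.range (d + 1), C (α (2 * k + 1)) * X ^ k).degree < (d : WithBot ℕ)
      rw [Finset.sum_range_succ, hn', hα (Nat.odd_iff.mp ho), C_0, zero_mul, add_zero]
      exact degree_sum_range_C_mul_X_pow_lt _ _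
  obtain ⟨k, hk⟩ : ∃ k, p (l k) ≠ 0 := by
    by_contra! hzero
    have hdeg : (normSqForm A B).degree < (Fintype.card (Fin n) : WithBot ℕ) := by
      rw [Fintype.card_fin]
      exact degree_normSqForm_lt (degree_sum_range_C_mul_X_pow_lt _ _) hB (by omega) hb
    obtain ⟨hA0, hB0⟩ := eq_zero_of_forall_eval_eq_zero_of_biradial hinj hbir hdeg
      fun k => (hrep (l k)).symm.trans (hzero k)
    obtain ⟨z, hz⟩ := hpne
    exact hz (by rw [hrep z, hA0, hB0]; simp)
  exact Finset.sum_pos' (fun i _ => mul_nonneg (hρ i).le (by positivity))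
    ⟨k, Finset.mem_univ _, mul_pos (hρ k) (by positivity)⟩
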